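/- In the graph 𝕋̃^s inflated by k with the clique of copies of each leaf x^i replaced by a graph G_i joined completely to the copies of the parent y^i (the cross-composed graph G'), if some G_i has pathwidth at most k − 2 and every G_j admits a path decomposition of width at most k − 1, then pw(G') ≤ k(s+2) − 2. -/

import Mathlib

open SimpleGraph

/-- A path decomposition of a graph `G`: a finite sequence of bags covering all
vertices and edges, in which each vertex occurs in a consecutive set of bags. -/
structure PathDecomp {V : Type*} (G : SimpleGraph V) where
  n : ℕ
  bag : Fin n → Finset V
  mem_bag : ∀ v : V, ∃ i, v ∈ bag i
  adj_bag : ∀ u v : V, G.Adj u v → ∃ i, u ∈ bag i ∧ v ∈ bag i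
  convex : ∀ v : V, ∀ i j l : Fin n, i ≤ j → j ≤ l → v ∈ bag i → v ∈ bag l → v ∈ bag j

/-- The width of a path decomposition: maximum bag size minus one. -/
def PathDecomp.width {V : Type*} {G : SimpleGraph V} (P : PathDecomp G) : ℕ :=
  (Finset.univ.sup fun i => (P.bag i).card) - 1

/-- Pathwidth: the minimum width over all path decompositions. -/
noncomputable def pathwidth {V : Type*} (G : SimpleGraph V) : ℕ :=
  sInf {w | ∃ P : PathDecomp G, P.width = w}

/-- The inflation `G ⋄ k`: each vertex is replaced by a `k`-clique, with complete
connections between the cliques of adjacent vertices. -/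
def inflate {V : Type*} (G : SimpleGraph V) (k : ℕ) : SimpleGraph (V × Fin k) :=
  SimpleGraph.fromRel fun x y => x.1 = y.1 ∨ G.Adj x.1 y.1


/-- Addresses of vertices of the complete ternary tree `𝕋^s` of height `s`. -/
def TreeVert (s : ℕ) : Type := {l : List (Fin 3) // l.length ≤ s}

/-- Addresses of the leaves of `𝕋^s` (equivalently, indices of the pendant
leaves `x^i` of `𝕋̃^s`, whose parents `y^i` are the leaves of `𝕋^s`). -/
def LeafIdx (s : ℕ) : Type := {l : List (Fin 3) // l.length = s}

/-- The cross-composed graph `G'`: the inflation of `𝕋̃^s` by `k` in which, for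
each pendant leaf `x^i`, the `k`-clique of copies of `x^i` is replaced by the
input graph `G_i`, completely joined to the `k` copies of the parent `y^i`.
The remaining tree part is the inflation of `𝕋^s` by `k`. -/
def crossComposed (s k : ℕ) {U : Type} (G : LeafIdx s → SimpleGraph U) :
    SimpleGraph ((TreeVert s × Fin k) ⊕ (LeafIdx s × U)) :=
  SimpleGraph.fromRel fun x y =>
    (∃ p q : TreeVert s × Fin k, x = Sum.inl p ∧ y = Sum.inl q ∧
      (p.1.1 = q.1.1 ∨ ∃ a : Fin 3, q.1.1 = p.1.1 ++ [a])) ∨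
    (∃ (l : LeafIdx s) (u u' : U), x = Sum.inr (l, u) ∧ y = Sum.inr (l, u') ∧
      (G l).Adj u u') ∨
    (∃ (l : LeafIdx s) (u : U) (q : TreeVert s × Fin k),
      x = Sum.inr (l, u) ∧ y = Sum.inl q ∧ q.1.1 = l.1)

/-!
The decomposition is built bottom-up along the ternary tree. Below a node `q` of height `m`
there is a path decomposition with bags of size at most `k (m + 2)` whose last bag contains the
`k` copies of `q`: decompose the first child's subtree, then put the bag of the copies of `q`
and of that child, then the decompositions of the other two subtrees with the copies of `q`
added to every bag. At a leaf `y^j`, take the bags of a decomposition of `G_j`, each joined with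
the copies of `y^j`.

Along the path from the root to a leaf `i` with `pw(G_i) ≤ k - 2` one saves a whole layer: the
two side subtrees of each node on the path are placed before and, reversed, after the
continuation of the path, so that only the bags of the path itself carry the copies of the
current node. These bags have size at most `k (m + 1) + (k - 1)` at height `m`, which at the
root is `k (s + 2) - 1`.
-/

namespace List

variable {α : Type*} {L L₁ L₂ : List (Finset α)} {v : α}

def Occurs (L : List (Finset α)) (v : α) : Prop := ∃ b ∈ L, v ∈ b

/-- The bags of `L` containing `v` are consecutive (`getD` returns `∅` out of range). -/
def Contiguous (L : List (Finset α)) (v : α) : Prop :=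
  ∀ a b c : ℕ, a ≤ b → b ≤ c → v ∈ L.getD a ∅ → v ∈ L.getD c ∅ → v ∈ L.getD b ∅

lemma lt_length_of_mem_getD {i : ℕ} (h : v ∈ L.getD i ∅) : i < L.length := by
  by_contra! hi
  rw [getD_eq_default _ _ hi] at h
  exact Finset.notMem_empty _ h

lemma occurs_iff_mem_getD : L.Occurs v ↔ ∃ i, v ∈ L.getD i ∅ := by
  constructor
  · rintro ⟨b, hb, hv⟩
    obtain ⟨i, hi, rfl⟩ := getElem_of_mem hb
    exact ⟨i, by rwa [getD_eq_getElem _ _ hi]⟩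
  · rintro ⟨i, hv⟩
    have hi := lt_length_of_mem_getD hv
    exact ⟨_, getElem_mem hi, by rwa [← getD_eq_getElem _ ∅ hi]⟩

@[simp] lemma occurs_append : (L₁ ++ L₂).Occurs v ↔ L₁.Occurs v ∨ L₂.Occurs v := by
  simp [Occurs, or_and_right, exists_or]

@[simp] lemma not_occurs_nil : ¬ ([] : List (Finset α)).Occurs v := by
  simp [Occurs]

@[simp] lemma occurs_cons {b : Finset α} : (b :: L).Occurs v ↔ v ∈ b ∨ L.Occurs v := by
  simp [Occurs]

@[simp] lemma occurs_reverse : L.reverse.Occurs v ↔ L.Occurs v := by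
  simp [Occurs]

@[simp] lemma occurs_singleton {b : Finset α} : [b].Occurs v ↔ v ∈ b := by
  simp [Occurs]

lemma Occurs.of_map_union [DecidableEq α] {S : Finset α} (h : (L.map (· ∪ S)).Occurs v) :
    v ∈ S ∨ L.Occurs v := by
  obtain ⟨_, hb', hv⟩ := h
  obtain ⟨b, hb, rfl⟩ := mem_map.1 hb'
  exact (Finset.mem_union.1 hv).symm.imp id fun h => ⟨b, hb, h⟩

lemma exists_mem_getLast?_append {β : Type*} {A B : List β} {p : β → Prop} (hB : B ≠ [])
    (h : ∀ b ∈ B, p b) : ∃ b ∈ (A ++ B).getLast?, p b :=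
  ⟨B.getLast hB, by simp [getLast?_eq_some_getLast hB], h _ (getLast_mem hB)⟩

lemma contiguous_of_forall_mem (h : ∀ b ∈ L, v ∈ b) : L.Contiguous v := by
  intro a b c _ hbc _ hc
  have hb : b < L.length := (hbc.trans_lt (lt_length_of_mem_getD hc))
  rw [getD_eq_getElem _ _ hb]
  exact h _ (getElem_mem hb)

lemma contiguous_of_not_occurs (h : ¬ L.Occurs v) : L.Contiguous v :=
  fun a _ _ _ _ ha _ => absurd (occurs_iff_mem_getD.2 ⟨a, ha⟩) h

lemma contiguous_singleton (b : Finset α) : [b].Contiguous v := by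
  intro x y z hxy hyz hx hz
  have := lt_length_of_mem_getD hz
  simp only [length_singleton] at this
  obtain rfl : y = x := by omega
  exact hx

lemma Contiguous.append (h₁ : L₁.Contiguous v) (h₂ : L₂.Contiguous v)
    (hb : L₁.Occurs v → L₂.Occurs v → (∀ b ∈ L₁.getLast?, v ∈ b) ∧ ∀ b ∈ L₂.head?, v ∈ b) :
    (L₁ ++ L₂).Contiguous v := by
  have left : ∀ i < L₁.length, (L₁ ++ L₂).getD i ∅ = L₁.getD i ∅ :=
    fun i hi => getD_append _ _ _ _ hi
  have right : ∀ i, L₁.length ≤ i → (L₁ ++ L₂).getD i ∅ = L₂.getD (i - L₁.length) ∅ :=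
    fun i hi => getD_append_right _ _ _ _ hi
  intro a b c hab hbc ha hc
  rcases lt_or_ge c L₁.length with hc₁ | hc₁
  · rw [left _ (by omega)] at ha ⊢; rw [left _ hc₁] at hc
    exact h₁ a b c hab hbc ha hc
  rw [right _ hc₁] at hc
  rcases lt_or_ge a L₁.length with ha₁ | ha₁
  · rw [left _ ha₁] at ha
    obtain ⟨hlast, hhead⟩ := hb (occurs_iff_mem_getD.2 ⟨a, ha⟩) (occurs_iff_mem_getD.2 ⟨_, hc⟩)
    rcases lt_or_ge b L₁.length with hb₁ | hb₁
    · rw [left _ hb₁]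
      refine h₁ a b (L₁.length - 1) hab (by omega) ha ?_
      rw [getD_eq_getElem _ _ (by omega)]
      exact hlast _ (by rw [getLast?_eq_getElem?]; simp)
    · rw [right _ hb₁]
      have hL₂ : 0 < L₂.length := lt_of_le_of_lt (Nat.zero_le _) (lt_length_of_mem_getD hc)
      refine h₂ 0 _ _ (Nat.zero_le _) (by omega) ?_ hc
      rw [getD_eq_getElem _ _ hL₂]
      exact hhead _ (by rw [head?_eq_getElem?]; simp [hL₂])
  · rw [right _ ha₁] at ha; rw [right _ (by omega)]
    exact h₂ _ _ _ (by omega) (by omega) ha hc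

lemma Contiguous.map_union [DecidableEq α] (h : L.Contiguous v) (S : Finset α) :
    (L.map (· ∪ S)).Contiguous v := by
  by_cases hv : v ∈ S
  · exact contiguous_of_forall_mem fun b hb => by
      obtain ⟨b, -, rfl⟩ := mem_map.1 hb
      exact Finset.mem_union_right _ hv
  have key : ∀ i, v ∈ (L.map (· ∪ S)).getD i ∅ ↔ v ∈ L.getD i ∅ := fun i => by
    simp only [getD_eq_getElem?_getD, getElem?_map]
    cases L[i]? <;> simp [hv]
  intro a b c hab hbc ha hc
  rw [key] at ha hc ⊢
  exact h a b c hab hbc ha hc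

lemma Contiguous.reverse (h : L.Contiguous v) : L.reverse.Contiguous v := by
  have key : ∀ i < L.length, L.reverse.getD i ∅ = L.getD (L.length - 1 - i) ∅ := fun i hi => by
    rw [getD_eq_getElem _ _ (by simpa using hi), getD_eq_getElem _ _ (by omega)]
    exact getElem_reverse _
  intro a b c hab hbc ha hc
  have hcL : c < L.length := by simpa using lt_length_of_mem_getD hc
  rw [key _ (by omega)] at ha hc ⊢
  exact h _ _ _ (by omega) (by omega) hc ha

end List

namespace PathDecomp

variable {V : Type*} {G : SimpleGraph V}

def ofList (L : List (Finset V)) (hmem : ∀ v, L.Occurs v)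
    (hadj : ∀ u v, G.Adj u v → ∃ b ∈ L, u ∈ b ∧ v ∈ b) (hconv : ∀ v, L.Contiguous v) :
    PathDecomp G where
  n := L.length
  bag i := L[i]
  mem_bag v := by
    obtain ⟨_, hb, hv⟩ := hmem v
    obtain ⟨i, hi, rfl⟩ := List.getElem_of_mem hb
    exact ⟨⟨i, hi⟩, hv⟩
  adj_bag u v huv := by
    obtain ⟨_, hb, hu, hv⟩ := hadj u v huv
    obtain ⟨i, hi, rfl⟩ := List.getElem_of_mem hb
    exact ⟨⟨i, hi⟩, hu, hv⟩
  convex v i j l hij hjl hi hl := by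
    have key : ∀ t : Fin L.length, L.getD t ∅ = L[t] := fun t => List.getD_eq_getElem _ _ t.2
    rw [← key] at hi hl ⊢
    exact hconv v i j l hij hjl hi hl

lemma card_bag_le_width_add_one (P : PathDecomp G) (t : Fin P.n) :
    (P.bag t).card ≤ P.width + 1 := by
  have := Finset.le_sup (f := fun t => (P.bag t).card) (Finset.mem_univ t)
  unfold width
  omega

lemma contiguous_image {W : Type*} [DecidableEq W] (P : PathDecomp G) {f : V → W}
    (hf : Function.Injective f) (w : W) :
    (List.ofFn fun t => (P.bag t).image f).Contiguous w := by
  by_cases hw : ∃ u, f u = w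
  · obtain ⟨u, rfl⟩ := hw
    intro a b c hab hbc ha hc
    have hc' := List.lt_length_of_mem_getD hc
    simp only [List.length_ofFn] at hc'
    rw [List.getD_eq_getElem _ _ (by simp; omega), List.getElem_ofFn,
      hf.mem_finset_image] at ha hc ⊢
    exact P.convex u ⟨a, by omega⟩ ⟨b, by omega⟩ ⟨c, hc'⟩ hab hbc ha hc
  · refine List.contiguous_of_not_occurs ?_
    rintro ⟨_, hb, hwb⟩
    obtain ⟨t, rfl⟩ := List.mem_ofFn.1 hb
    obtain ⟨u, -, rfl⟩ := Finset.mem_image.1 hwb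
    exact hw ⟨u, rfl⟩

end PathDecomp

section Pathwidth

variable {V : Type*} {G : SimpleGraph V}

lemma pathwidth_le_width (P : PathDecomp G) :
    pathwidth G ≤ P.width :=
  Nat.sInf_le ⟨P, rfl⟩

lemma exists_pathDecomp_card_bag_le [Nonempty (PathDecomp G)] {w : ℕ} (hw : pathwidth G ≤ w) :
    ∃ P : PathDecomp G, ∀ t, (P.bag t).card ≤ w + 1 := by
  obtain ⟨P, hP⟩ := Nat.sInf_mem (s := {w | ∃ P : PathDecomp G, P.width = w})
    ⟨_, Classical.arbitrary _, rfl⟩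
  exact ⟨P, fun t => (P.card_bag_le_width_add_one t).trans (by unfold pathwidth at hw; omega)⟩

lemma pathwidth_le_of_bags (L : List (Finset V))
    (hmem : ∀ v, L.Occurs v) (hadj : ∀ u v, G.Adj u v → ∃ b ∈ L, u ∈ b ∧ v ∈ b)
    (hconv : ∀ v, L.Contiguous v) {c : ℕ} (hcard : ∀ b ∈ L, b.card ≤ c) :
    pathwidth G ≤ c - 1 := by
  refine (pathwidth_le_width (PathDecomp.ofList L hmem hadj hconv)).trans ?_
  exact Nat.sub_le_sub_right (Finset.sup_le fun i _ => hcard _ (List.getElem_mem _)) 1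

end Pathwidth

namespace CrossComposed

attribute [local instance] Classical.propDecidable

variable {s k : ℕ} {U : Type} {G : LeafIdx s → SimpleGraph U}

abbrev Vertex (s k : ℕ) (U : Type) := (TreeVert s × Fin k) ⊕ (LeafIdx s × U)

/-- The tree node a vertex belongs to: its own node, or the leaf its input graph hangs from. -/
def addr : Vertex s k U → List (Fin 3)
  | .inl (x, _) => x.1
  | .inr (j, _) => j.1

def Below (q : List (Fin 3)) (v : Vertex s k U) : Prop := q <+: addr v

noncomputable def copies (q : List (Fin 3)) : Finset (Vertex s k U) :=
  if h : q.length ≤ s then Finset.univ.image fun c => .inl (⟨q, h⟩, c) else ∅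

lemma card_copies_le (q : List (Fin 3)) : (copies q : Finset (Vertex s k U)).card ≤ k := by
  unfold copies
  split
  · exact Finset.card_image_le.trans (by simp)
  · simp

lemma inl_mem_copies (x : TreeVert s) (c : Fin k) :
    (.inl (x, c) : Vertex s k U) ∈ copies x.1 := by
  simp only [copies, x.2, dif_pos, Finset.mem_image, Finset.mem_univ, true_and]
  exact ⟨c, rfl⟩

lemma addr_of_mem_copies {q : List (Fin 3)} {v : Vertex s k U} (h : v ∈ copies q) :
    addr v = q := by
  unfold copies at h
  split at h
  · obtain ⟨c, -, rfl⟩ := Finset.mem_image.1 h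
    rfl
  · simp at h

lemma below_of_mem_copies {q : List (Fin 3)} {v : Vertex s k U} (h : v ∈ copies q) :
    Below q v :=
  (addr_of_mem_copies h).symm ▸ List.prefix_refl q

lemma Below.mono {q q' : List (Fin 3)} {v : Vertex s k U} (h : Below q' v) (hq : q <+: q') :
    Below q v :=
  hq.trans h

lemma Below.snoc_eq {q : List (Fin 3)} {d e : Fin 3} {v : Vertex s k U}
    (hd : Below (q ++ [d]) v) (he : Below (q ++ [e]) v) : d = e := by
  have := (List.prefix_of_prefix_length_le hd he (by simp)).eq_of_length (by simp)
  simpa using this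

lemma Below.not_mem_copies_of_snoc {q : List (Fin 3)} {d : Fin 3} {v : Vertex s k U}
    (h : Below (q ++ [d]) v) : v ∉ copies q := fun hv => by
  have := h.length_le
  rw [addr_of_mem_copies hv] at this
  simp at this

lemma Below.cases {q : List (Fin 3)} {v : Vertex s k U} (h : Below q v) (hq : q.length < s) :
    v ∈ copies q ∨ ∃ d, Below (q ++ [d]) v := by
  obtain ⟨t, ht⟩ := h
  rcases t with _ | ⟨d, t⟩
  · rcases v with ⟨x, c⟩ | ⟨j, x⟩
    · left
      simp only [List.append_nil] at ht
      exact ht ▸ inl_mem_copies x c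
    · simp only [addr, List.append_nil] at ht
      exact absurd (ht ▸ j.2) hq.ne
  · exact .inr ⟨d, t, by simpa using ht⟩

lemma Below.leaf_cases {j : LeafIdx s} {v : Vertex s k U} (h : Below j.1 v) :
    v ∈ copies j.1 ∨ ∃ x, v = .inr (j, x) := by
  rcases v with ⟨x, c⟩ | ⟨j', x⟩
  · have hx : j.1 = x.1 := h.eq_of_length_le (by simp [addr, j.2, x.2])
    exact .inl (hx ▸ inl_mem_copies x c)
  · have : j = j' := Subtype.ext (h.eq_of_length (by simp [addr, j.2, j'.2]))
    exact .inr ⟨x, this ▸ rfl⟩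

lemma addr_prefix_of_adj {u v : Vertex s k U} (h : (crossComposed s k G).Adj u v) :
    addr u <+: addr v ∨ addr v <+: addr u := by
  simp only [crossComposed, fromRel_adj] at h
  obtain ⟨-, h | h⟩ := h <;>
  rcases h with ⟨p, q, rfl, rfl, h | ⟨a, h⟩⟩ | ⟨l, x, y, rfl, rfl, -⟩ | ⟨l, x, q, rfl, rfl, h⟩ <;>
  simp_all [addr]

lemma mem_copies_of_adj {u v : Vertex s k U} (h : (crossComposed s k G).Adj u v)
    (hne : addr u ≠ addr v) : v ∈ copies (addr v) ∧ (addr v).length ≤ (addr u).length + 1 := by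
  simp only [crossComposed, fromRel_adj] at h
  obtain ⟨-, h | h⟩ := h <;>
  rcases h with ⟨p, q, rfl, rfl, h | ⟨a, h⟩⟩ | ⟨l, x, y, rfl, rfl, -⟩ | ⟨l, x, q, rfl, rfl, h⟩ <;>
  first
  | exact ⟨inl_mem_copies _ _, by simp_all [addr] <;> omega⟩
  | simp_all [addr]

lemma adj_of_adj_inr {j : LeafIdx s} {x y : U}
    (h : (crossComposed s k G).Adj (.inr (j, x)) (.inr (j, y))) : (G j).Adj x y := by
  simp only [crossComposed, fromRel_adj] at h
  obtain ⟨-, h | h⟩ := h <;> simp_all [Adj.symm]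

variable (G) in
def CoversBelow (L : List (Finset (Vertex s k U))) (q : List (Fin 3)) : Prop :=
  ∀ u v, (u = v ∨ (crossComposed s k G).Adj u v) → Below q u → Below q v →
    ∃ b ∈ L, u ∈ b ∧ v ∈ b

lemma mem_copies_snoc_of_adj {q : List (Fin 3)} {d : Fin 3} {u v : Vertex s k U}
    (hu : u ∈ copies q) (hv : Below (q ++ [d]) v) (huv : u = v ∨ (crossComposed s k G).Adj u v) :
    v ∈ copies (q ++ [d]) := by
  rcases huv with rfl | huv
  · exact absurd hu hv.not_mem_copies_of_snoc
  have hne : addr u ≠ addr v := fun h => by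
    have := hv.length_le
    rw [← h, addr_of_mem_copies hu] at this
    simp at this
  obtain ⟨hvc, hlen⟩ := mem_copies_of_adj huv hne
  rwa [← hv.eq_of_length_le (by simpa [addr_of_mem_copies hu] using hlen)] at hvc

lemma eq_of_below_snoc_of_adj {q : List (Fin 3)} {d e : Fin 3} {u v : Vertex s k U}
    (hu : Below (q ++ [d]) u) (hv : Below (q ++ [e]) v)
    (huv : u = v ∨ (crossComposed s k G).Adj u v) : d = e := by
  rcases huv with rfl | huv
  · exact hu.snoc_eq hv
  rcases addr_prefix_of_adj huv with h | h
  · exact Below.snoc_eq (hu.trans h) hv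
  · exact hu.snoc_eq (hv.trans h)

lemma coversBelow_of_children {L : List (Finset (Vertex s k U))} {q : List (Fin 3)}
    (hq : q.length < s)
    (h : ∀ d : Fin 3, ∃ C, CoversBelow G C (q ++ [d]) ∧ (∀ b ∈ C, ∃ b' ∈ L, b ⊆ b') ∧
      ∃ b ∈ L, copies q ∪ copies (q ++ [d]) ⊆ b) :
    CoversBelow G L q := by
  intro u v huv hu hv
  choose C hC hdom hjoin using h
  have join : ∀ d, u ∈ copies q ∪ copies (q ++ [d]) → v ∈ copies q ∪ copies (q ++ [d]) →
      ∃ b ∈ L, u ∈ b ∧ v ∈ b := fun d hu hv =>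
    let ⟨b, hb, hsub⟩ := hjoin d
    ⟨b, hb, hsub hu, hsub hv⟩
  rcases hu.cases hq with hu | ⟨d, hud⟩ <;> rcases hv.cases hq with hv | ⟨e, hve⟩
  · exact join 0 (Finset.mem_union_left _ hu) (Finset.mem_union_left _ hv)
  · exact join e (Finset.mem_union_left _ hu)
      (Finset.mem_union_right _ (mem_copies_snoc_of_adj hu hve huv))
  · exact join d (Finset.mem_union_right _ (mem_copies_snoc_of_adj hv hud
      (huv.imp Eq.symm Adj.symm))) (Finset.mem_union_left _ hv)
  · obtain rfl := eq_of_below_snoc_of_adj hud hve huv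
    obtain ⟨b, hb, hub, hvb⟩ := hC d u v huv hud hve
    obtain ⟨b', hb', hsub⟩ := hdom d b hb
    exact ⟨b', hb', hsub hub, hsub hvb⟩

variable (Q : ∀ j : LeafIdx s, PathDecomp (G j))

/-- The bag `∅ ∪ copies j` keeps the list nonempty when `Q j` has no bags. -/
noncomputable def leafBags (j : LeafIdx s) : List (Finset (Vertex s k U)) :=
  (∅ :: List.ofFn fun t => ((Q j).bag t).image fun x => .inr (j, x)).map (· ∪ copies j.1)

variable {Q}

lemma leafBags_ne_nil (j : LeafIdx s) : (leafBags Q j : List (Finset (Vertex s k U))) ≠ [] := by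
  simp [leafBags]

lemma copies_subset_of_mem_leafBags {j : LeafIdx s} {b : Finset (Vertex s k U)}
    (hb : b ∈ leafBags Q j) : copies j.1 ⊆ b := by
  obtain ⟨b, -, rfl⟩ := List.mem_map.1 hb
  exact Finset.subset_union_right

lemma below_of_occurs_leafBags {j : LeafIdx s} {v : Vertex s k U}
    (h : (leafBags Q j).Occurs v) : Below j.1 v := by
  rcases h.of_map_union with h | ⟨_, hb, hv⟩
  · exact below_of_mem_copies h
  rcases List.mem_cons.1 hb with rfl | hb
  · simp at hv
  obtain ⟨t, rfl⟩ := List.mem_ofFn.1 hb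
  obtain ⟨x, -, rfl⟩ := Finset.mem_image.1 hv
  exact List.prefix_refl _

lemma card_le_of_mem_leafBags {j : LeafIdx s} {w : ℕ} (hw : ∀ t, ((Q j).bag t).card ≤ w)
    {b : Finset (Vertex s k U)} (hb : b ∈ leafBags Q j) : b.card ≤ w + k := by
  obtain ⟨b, hb', rfl⟩ := List.mem_map.1 hb
  refine (Finset.card_union_le _ _).trans (add_le_add ?_ (card_copies_le _))
  rcases List.mem_cons.1 hb' with rfl | hb'
  · simp
  obtain ⟨t, rfl⟩ := List.mem_ofFn.1 hb'
  exact Finset.card_image_le.trans (hw t)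

lemma contiguous_leafBags (j : LeafIdx s) (v : Vertex s k U) : (leafBags Q j).Contiguous v :=
  ((List.contiguous_singleton ∅).append
    ((Q j).contiguous_image (fun x y h => by simpa using h) v) (by simp)).map_union _

lemma coversBelow_leafBags (j : LeafIdx s) :
    CoversBelow G (leafBags Q j : List (Finset (Vertex s k U))) j.1 := by
  have hbag : ∀ t, ((Q j).bag t).image (fun x => (.inr (j, x) : Vertex s k U)) ∪ copies j.1 ∈
      leafBags Q j :=
    fun t => List.mem_map_of_mem (List.mem_cons_of_mem _ (List.mem_ofFn.2 ⟨t, rfl⟩))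
  have hroot : (∅ ∪ copies j.1 : Finset (Vertex s k U)) ∈ leafBags Q j :=
    List.mem_map_of_mem List.mem_cons_self
  intro u v huv hu hv
  rcases hu.leaf_cases with hu | ⟨x, rfl⟩ <;> rcases hv.leaf_cases with hv | ⟨y, rfl⟩
  · exact ⟨_, hroot, Finset.mem_union_right _ hu, Finset.mem_union_right _ hv⟩
  · obtain ⟨t, ht⟩ := (Q j).mem_bag y
    exact ⟨_, hbag t, Finset.mem_union_right _ hu,
      Finset.mem_union_left _ (Finset.mem_image_of_mem _ ht)⟩
  · obtain ⟨t, ht⟩ := (Q j).mem_bag x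
    exact ⟨_, hbag t, Finset.mem_union_left _ (Finset.mem_image_of_mem _ ht),
      Finset.mem_union_right _ hv⟩
  · obtain ⟨t, hxt, hyt⟩ : ∃ t, x ∈ (Q j).bag t ∧ y ∈ (Q j).bag t := by
      rcases huv with h | h
      · obtain rfl : x = y := by simpa using h
        exact ((Q j).mem_bag x).imp fun t h => ⟨h, h⟩
      · exact (Q j).adj_bag x y (adj_of_adj_inr h)
    exact ⟨_, hbag t, Finset.mem_union_left _ (Finset.mem_image_of_mem _ hxt),
      Finset.mem_union_left _ (Finset.mem_image_of_mem _ hyt)⟩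

variable (Q) in
noncomputable def treeBags : ℕ → List (Fin 3) → List (Finset (Vertex s k U))
  | 0, q => if h : q.length = s then leafBags Q ⟨q, h⟩ else []
  | m + 1, q => treeBags m (q ++ [0]) ++
      (copies (q ++ [0]) :: (treeBags m (q ++ [1]) ++ treeBags m (q ++ [2]))).map (· ∪ copies q)

lemma treeBags_zero {q : List (Fin 3)} (h : q.length = s) :
    (treeBags Q 0 q : List (Finset (Vertex s k U))) = leafBags Q ⟨q, h⟩ :=
  dif_pos h

lemma below_of_occurs_treeBags {m : ℕ} {q : List (Fin 3)} (hq : q.length + m = s)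
    {v : Vertex s k U} (h : (treeBags Q m q).Occurs v) : Below q v := by
  induction m generalizing q with
  | zero => rw [treeBags_zero hq] at h; exact below_of_occurs_leafBags h
  | succ m ih =>
    have ih' : ∀ d : Fin 3, (treeBags Q m (q ++ [d])).Occurs v → Below q v := fun d h =>
      (ih (by simp; omega) h).mono (List.prefix_append _ _)
    simp only [treeBags, List.occurs_append] at h
    rcases h with h | h
    · exact ih' 0 h
    rcases h.of_map_union with h | h
    · exact below_of_mem_copies h
    simp only [List.occurs_cons, List.occurs_append] at h
    rcases h with h | h | h
    · exact (below_of_mem_copies h).mono (List.prefix_append _ _)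
    · exact ih' 1 h
    · exact ih' 2 h

lemma exists_getLast?_treeBags (m : ℕ) (q : List (Fin 3)) (hq : q.length + m = s) :
    ∃ b ∈ (treeBags Q m q).getLast?, (copies q : Finset (Vertex s k U)) ⊆ b := by
  cases m with
  | zero =>
    simpa [treeBags_zero hq] using List.exists_mem_getLast?_append (A := [])
      (leafBags_ne_nil ⟨q, hq⟩) fun _ => copies_subset_of_mem_leafBags (Q := Q) (k := k)
  | succ m =>
    refine List.exists_mem_getLast?_append (by simp) fun b hb => ?_
    obtain ⟨b, -, rfl⟩ := List.mem_map.1 hb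
    exact Finset.subset_union_right

lemma card_le_of_mem_treeBags (hQ : ∀ j t, ((Q j).bag t).card ≤ k) {m : ℕ} {q : List (Fin 3)}
    (hq : q.length + m = s) {b : Finset (Vertex s k U)} (hb : b ∈ treeBags Q m q) :
    b.card ≤ k * (m + 2) := by
  induction m generalizing q b with
  | zero =>
    rw [treeBags_zero hq] at hb
    exact (card_le_of_mem_leafBags (hQ _) hb).trans_eq (by ring)
  | succ m ih =>
    have ih' : ∀ d : Fin 3, ∀ b ∈ treeBags Q m (q ++ [d]), b.card ≤ k * (m + 2) :=
      fun d b hb => ih (by simp; omega) hb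
    simp only [treeBags, List.mem_append, List.mem_map, List.mem_cons] at hb
    rcases hb with hb | ⟨b, hb, rfl⟩
    · exact (ih' 0 b hb).trans (by gcongr; omega)
    refine (Finset.card_union_le _ _).trans ?_
    have hb : b.card ≤ k * (m + 2) := by
      rcases hb with rfl | hb | hb
      · exact (card_copies_le _).trans (Nat.le_mul_of_pos_right _ (by omega))
      · exact ih' 1 b hb
      · exact ih' 2 b hb
    linarith [card_copies_le (s := s) (k := k) (U := U) q]

lemma mem_treeBags_succ_of_ne_zero {m : ℕ} {q : List (Fin 3)} {d : Fin 3} (hd : d ≠ 0)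
    {b : Finset (Vertex s k U)} (hb : b ∈ treeBags Q m (q ++ [d])) :
    b ∪ copies q ∈ treeBags Q (m + 1) q := by
  refine List.mem_append_right _ (List.mem_map_of_mem (List.mem_cons_of_mem _ ?_))
  fin_cases d
  · exact absurd rfl hd
  · exact List.mem_append_left _ hb
  · exact List.mem_append_right _ hb

lemma contiguous_treeBags (m : ℕ) (q : List (Fin 3)) (hq : q.length + m = s) (v : Vertex s k U) :
    (treeBags Q m q).Contiguous v := by
  induction m generalizing q with
  | zero => rw [treeBags_zero hq]; exact contiguous_leafBags _ _
  | succ m ih =>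
    have hlen : ∀ d : Fin 3, (q ++ [d]).length + m = s := fun d => by simp; omega
    have hb : ∀ d, (treeBags Q m (q ++ [d])).Occurs v → Below (q ++ [d]) v :=
      fun d => below_of_occurs_treeBags (hlen d)
    refine (ih _ (hlen 0)).append (((List.contiguous_singleton _).append
      ((ih _ (hlen 1)).append (ih _ (hlen 2)) ?_) ?_).map_union _) ?_
    · exact fun h₁ h₂ => absurd ((hb 1 h₁).snoc_eq (hb 2 h₂)) (by decide)
    · intro h₀ h₁₂
      have h₀ := below_of_mem_copies (List.occurs_singleton.1 h₀)
      rcases List.occurs_append.1 h₁₂ with h | h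
      · exact absurd (h₀.snoc_eq (hb 1 h)) (by decide)
      · exact absurd (h₀.snoc_eq (hb 2 h)) (by decide)
    · intro h₀ hrest
      have h₀ := hb 0 h₀
      have hv : v ∈ copies (q ++ [0]) := by
        rcases hrest.of_map_union with h | h
        · exact absurd h h₀.not_mem_copies_of_snoc
        simp only [List.occurs_cons, List.occurs_append] at h
        rcases h with h | h | h
        · exact h
        · exact absurd (h₀.snoc_eq (hb 1 h)) (by decide)
        · exact absurd (h₀.snoc_eq (hb 2 h)) (by decide)
      obtain ⟨b, hb, hsub⟩ := exists_getLast?_treeBags (Q := Q) m _ (hlen 0)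
      refine ⟨fun b' hb' => Option.mem_unique hb hb' ▸ hsub hv, fun b' hb' => ?_⟩
      simp only [List.map_cons, List.head?_cons, Option.mem_def, Option.some.injEq] at hb'
      exact hb' ▸ Finset.mem_union_left _ hv

lemma coversBelow_treeBags (m : ℕ) (q : List (Fin 3)) (hq : q.length + m = s) :
    CoversBelow G (treeBags Q m q : List (Finset (Vertex s k U))) q := by
  induction m generalizing q with
  | zero => rw [treeBags_zero hq]; exact coversBelow_leafBags _
  | succ m ih =>
    refine coversBelow_of_children (by omega) fun d => ⟨_, ih (q ++ [d]) (by simp; omega), ?_⟩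
    by_cases hd : d = 0
    · subst hd
      refine ⟨fun b hb => ⟨b, List.mem_append_left _ hb, subset_rfl⟩,
        copies (q ++ [0]) ∪ copies q, by simp [treeBags], (Finset.union_comm _ _).subset⟩
    · obtain ⟨b, hb, hsub⟩ := exists_getLast?_treeBags (Q := Q) m (q ++ [d]) (by simp; omega)
      refine ⟨fun b hb => ⟨_, mem_treeBags_succ_of_ne_zero hd hb, Finset.subset_union_left⟩,
        _, mem_treeBags_succ_of_ne_zero hd (List.mem_of_getLast? hb),
        Finset.union_subset Finset.subset_union_right (hsub.trans Finset.subset_union_left)⟩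

lemma fin_three_eq_or (c d : Fin 3) : d = c ∨ d = c + 1 ∨ d = c + 2 := by
  revert c d; decide

lemma fin_three_add_ne (c : Fin 3) : c + 1 ≠ c ∧ c + 2 ≠ c ∧ c + 2 ≠ c + 1 := by
  revert c; decide

variable (Q) in
/-- The decomposition below `p` that saves a layer along the path to the special leaf `p ++ r`. -/
noncomputable def spineBags : List (Fin 3) → List (Fin 3) → List (Finset (Vertex s k U))
  | p, [] => treeBags Q 0 p
  | p, c :: r => treeBags Q r.length (p ++ [c + 1]) ++
      (copies (p ++ [c + 1]) :: (spineBags (p ++ [c]) r ++ [copies (p ++ [c + 2])])).map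
        (· ∪ copies p) ++
      (treeBags Q r.length (p ++ [c + 2])).reverse

lemma below_of_occurs_spineBags {p r : List (Fin 3)} (hpr : p.length + r.length = s)
    {v : Vertex s k U} (h : (spineBags Q p r).Occurs v) : Below p v := by
  induction r generalizing p with
  | nil => exact below_of_occurs_treeBags hpr h
  | cons c r ih =>
    have hlen : ∀ d : Fin 3, (p ++ [d]).length + r.length = s := fun d => by
      simp at hpr ⊢; omega
    have hchild : ∀ d : Fin 3, Below (p ++ [d]) v → Below p v :=
      fun d h => h.mono (List.prefix_append _ _)
    simp only [spineBags, List.occurs_append, List.occurs_reverse] at h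
    rcases h with (h | h) | h
    · exact hchild _ (below_of_occurs_treeBags (hlen _) h)
    · rcases h.of_map_union with h | h
      · exact below_of_mem_copies h
      simp only [List.occurs_cons, List.occurs_append, List.not_occurs_nil, or_false] at h
      rcases h with h | h | h
      · exact hchild _ (below_of_mem_copies h)
      · exact hchild _ (ih (hlen _) h)
      · exact hchild _ (below_of_mem_copies h)
    · exact hchild _ (below_of_occurs_treeBags (hlen _) h)

lemma exists_mem_spineBags_copies_subset (p r : List (Fin 3)) (hpr : p.length + r.length = s) :
    ∃ b ∈ spineBags Q p r, (copies p : Finset (Vertex s k U)) ⊆ b := by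
  cases r with
  | nil =>
    obtain ⟨b, hb, hsub⟩ := exists_getLast?_treeBags (Q := Q) 0 p hpr
    exact ⟨b, List.mem_of_getLast? hb, hsub⟩
  | cons c r => exact ⟨_, List.mem_append_left _ (List.mem_append_right _
      (List.mem_map_of_mem List.mem_cons_self)), Finset.subset_union_right⟩

lemma card_le_of_mem_spineBags (hQ : ∀ j t, ((Q j).bag t).card ≤ k) {i : LeafIdx s} {w : ℕ}
    (hw : ∀ t, ((Q i).bag t).card ≤ w) {p r : List (Fin 3)} (hpr : p ++ r = i.1)
    {b : Finset (Vertex s k U)} (hb : b ∈ spineBags Q p r) :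
    b.card ≤ k * (r.length + 1) + w := by
  have hlen : p.length + r.length = s := by rw [← List.length_append, hpr, i.2]
  induction r generalizing p b with
  | nil =>
    obtain rfl : p = i.1 := by simpa using hpr
    rw [spineBags, treeBags_zero i.2] at hb
    exact (card_le_of_mem_leafBags hw hb).trans_eq (by simp [add_comm])
  | cons c r ih =>
    have hlen' : ∀ d : Fin 3, (p ++ [d]).length + r.length = s := fun d => by
      simp only [List.length_append, List.length_cons, List.length_nil] at hlen ⊢; omega
    have htree : ∀ d : Fin 3, ∀ b ∈ treeBags Q r.length (p ++ [d]),
        b.card ≤ k * ((c :: r).length + 1) + w := fun d b hb =>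
      (card_le_of_mem_treeBags hQ (hlen' d) hb).trans (by simp)
    simp only [spineBags, List.mem_append, List.mem_map, List.mem_cons, List.mem_reverse,
      List.not_mem_nil, or_false] at hb
    rcases hb with (hb | ⟨b, hb, rfl⟩) | hb
    · exact htree _ b hb
    · refine (Finset.card_union_le _ _).trans ?_
      have hcp := card_copies_le (s := s) (k := k) (U := U) p
      have hb : b.card ≤ k * (r.length + 1) + w := by
        rcases hb with rfl | hb | rfl
        · exact (card_copies_le _).trans (by nlinarith)
        · exact ih (by simpa using hpr) hb (hlen' c)
        · exact (card_copies_le _).trans (by nlinarith)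
      simp only [List.length_cons]
      nlinarith
    · exact htree _ b hb

lemma mem_copies_of_occurs_middle {p : List (Fin 3)} {c d : Fin 3}
    {S : List (Finset (Vertex s k U))} {v : Vertex s k U} (hS : S.Occurs v → Below (p ++ [c]) v)
    (hd : d ≠ c) (hv : Below (p ++ [d]) v)
    (h : (copies (p ++ [c + 1]) :: (S ++ [copies (p ++ [c + 2])])).Occurs v) :
    v ∈ copies (p ++ [d]) := by
  simp only [List.occurs_cons, List.occurs_append, List.not_occurs_nil, or_false] at h
  rcases h with h | h | h
  · obtain rfl := hv.snoc_eq (below_of_mem_copies h)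
    exact h
  · exact absurd (hv.snoc_eq (hS h)) hd
  · obtain rfl := hv.snoc_eq (below_of_mem_copies h)
    exact h

lemma contiguous_middle {p : List (Fin 3)} {c : Fin 3} {S : List (Finset (Vertex s k U))}
    {v : Vertex s k U} (hS : S.Occurs v → Below (p ++ [c]) v) (h : S.Contiguous v) :
    (copies (p ++ [c + 1]) :: (S ++ [copies (p ++ [c + 2])])).Contiguous v := by
  obtain ⟨hac, hbc, hba⟩ := fin_three_add_ne c
  refine (List.contiguous_singleton _).append (h.append (List.contiguous_singleton _) ?_) ?_
  · exact fun h₁ h₂ =>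
      absurd ((hS h₁).snoc_eq (below_of_mem_copies (List.occurs_singleton.1 h₂))) hbc.symm
  · intro h₁ h₂
    have h₁ := below_of_mem_copies (List.occurs_singleton.1 h₁)
    rcases List.occurs_append.1 h₂ with h | h
    · exact absurd (h₁.snoc_eq (hS h)) hac
    · exact absurd (h₁.snoc_eq (below_of_mem_copies (List.occurs_singleton.1 h))) hba.symm

lemma contiguous_spineBags (p r : List (Fin 3)) (hpr : p.length + r.length = s)
    (v : Vertex s k U) : (spineBags Q p r).Contiguous v := by
  induction r generalizing p with
  | nil => exact contiguous_treeBags 0 p hpr v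
  | cons c r ih =>
    have hlen : ∀ d : Fin 3, (p ++ [d]).length + r.length = s := fun d => by
      simp only [List.length_append, List.length_cons, List.length_nil] at hpr ⊢; omega
    have hT : ∀ d, (treeBags Q r.length (p ++ [d])).Occurs v → Below (p ++ [d]) v :=
      fun d => below_of_occurs_treeBags (hlen d)
    have hS := below_of_occurs_spineBags (Q := Q) (v := v) (hlen c)
    obtain ⟨hac, hbc, hba⟩ := fin_three_add_ne c
    refine ((contiguous_treeBags _ _ (hlen _) v).append
      ((contiguous_middle hS (ih _ (hlen c))).map_union _) ?_).append
      (contiguous_treeBags _ _ (hlen _) v).reverse ?_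
    · intro h₁ h₂
      have h₁ := hT _ h₁
      have hv : v ∈ copies (p ++ [c + 1]) := by
        rcases h₂.of_map_union with h | h
        · exact absurd h h₁.not_mem_copies_of_snoc
        · exact mem_copies_of_occurs_middle hS hac h₁ h
      obtain ⟨b, hb, hsub⟩ := exists_getLast?_treeBags (Q := Q) _ _ (hlen (c + 1))
      refine ⟨fun b' hb' => Option.mem_unique hb hb' ▸ hsub hv, fun b' hb' => ?_⟩
      simp only [List.map_cons, List.head?_cons, Option.mem_def, Option.some.injEq] at hb'
      exact hb' ▸ Finset.mem_union_left _ hv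
    · intro h₁ h₂
      have h₂ := hT _ (List.occurs_reverse.1 h₂)
      have hv : v ∈ copies (p ++ [c + 2]) := by
        rcases List.occurs_append.1 h₁ with h | h
        · exact absurd ((hT _ h).snoc_eq h₂) hba.symm
        rcases h.of_map_union with h | h
        · exact absurd h h₂.not_mem_copies_of_snoc
        · exact mem_copies_of_occurs_middle hS hbc h₂ h
      obtain ⟨b, hb, hsub⟩ := exists_getLast?_treeBags (Q := Q) _ _ (hlen (c + 2))
      refine ⟨fun b' hb' => ?_, fun b' hb' => ?_⟩
      · simp only [List.map_cons, List.map_append, ← List.cons_append, List.getLast?_append,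
          List.map_nil, List.getLast?_singleton, Option.some_or, Option.mem_def,
          Option.some.injEq] at hb'
        exact hb' ▸ Finset.mem_union_left _ hv
      · rw [List.head?_reverse] at hb'
        exact Option.mem_unique hb hb' ▸ hsub hv

lemma coversBelow_spineBags (p r : List (Fin 3)) (hpr : p.length + r.length = s) :
    CoversBelow G (spineBags Q p r : List (Finset (Vertex s k U))) p := by
  induction r generalizing p with
  | nil => exact coversBelow_treeBags 0 p hpr
  | cons c r ih =>
    have hlen : ∀ d : Fin 3, (p ++ [d]).length + r.length = s := fun d => by
      simp only [List.length_append, List.length_cons, List.length_nil] at hpr ⊢; omega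
    have hmid : ∀ b : Finset (Vertex s k U),
        b ∈ copies (p ++ [c + 1]) :: (spineBags Q (p ++ [c]) r ++ [copies (p ++ [c + 2])]) →
        b ∪ copies p ∈ spineBags Q p (c :: r) :=
      fun b hb => List.mem_append_left _ (List.mem_append_right _ (List.mem_map_of_mem hb))
    refine coversBelow_of_children (by simp at hpr; omega) fun d => ?_
    rcases fin_three_eq_or c d with rfl | rfl | rfl
    · obtain ⟨b, hb, hsub⟩ := exists_mem_spineBags_copies_subset (Q := Q) _ _ (hlen d)
      have hmem : ∀ b ∈ spineBags Q (p ++ [d]) r, b ∪ copies p ∈ spineBags Q p (d :: r) :=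
        fun b hb => hmid _ (List.mem_cons_of_mem _ (List.mem_append_left _ hb))
      exact ⟨_, ih _ (hlen d), fun b hb => ⟨_, hmem b hb, Finset.subset_union_left⟩,
        _, hmem b hb, Finset.union_subset Finset.subset_union_right
          (hsub.trans Finset.subset_union_left)⟩
    · exact ⟨_, coversBelow_treeBags _ _ (hlen _),
        fun b hb => ⟨b, List.mem_append_left _ (List.mem_append_left _ hb), subset_rfl⟩,
        _, hmid _ List.mem_cons_self, (Finset.union_comm _ _).subset⟩
    · exact ⟨_, coversBelow_treeBags _ _ (hlen _),
        fun b hb => ⟨b, List.mem_append_right _ (List.mem_reverse.2 hb), subset_rfl⟩,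
        _, hmid _ (List.mem_cons_of_mem _ (List.mem_append_right _ List.mem_cons_self)),
        (Finset.union_comm _ _).subset⟩

theorem pathwidth_le_of_card_bag_le (Q : ∀ j : LeafIdx s, PathDecomp (G j))
    (hQ : ∀ j t, ((Q j).bag t).card ≤ k) (i : LeafIdx s) (hi : ∀ t, ((Q i).bag t).card ≤ k - 1) :
    pathwidth (crossComposed s k G) ≤ k * (s + 2) - 2 := by
  have hlen : ([] : List (Fin 3)).length + i.1.length = s := by simp [i.2]
  have hcover := coversBelow_spineBags (Q := Q) (k := k) [] i.1 hlen
  refine (pathwidth_le_of_bags (spineBags Q [] i.1)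
    (fun v => (hcover v v (.inl rfl) List.nil_prefix List.nil_prefix).imp fun _ h => ⟨h.1, h.2.1⟩)
    (fun u v huv => hcover u v (.inr huv) List.nil_prefix List.nil_prefix)
    (contiguous_spineBags [] i.1 hlen)
    (fun b hb => card_le_of_mem_spineBags hQ hi (List.nil_append _) hb)).trans ?_
  rw [i.2]
  rcases Nat.eq_zero_or_pos k with rfl | hk
  · simp
  · rw [show k * (s + 2) = k * (s + 1) + k by ring]
    omega

end CrossComposed

/-- If some input graph `G_i` has pathwidth at most `k − 2` and every input
graph admits a path decomposition of width at most `k − 1`, then the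
cross-composed graph `G'` has pathwidth at most `k(s + 2) − 2`. -/
theorem crossComposed_pathwidth_le (s k : ℕ) (hk : 2 ≤ k) {U : Type}
    (G : LeafIdx s → SimpleGraph U)
    (hyes : ∃ i : LeafIdx s, pathwidth (G i) ≤ k - 2)
    (hdecomp : ∀ j : LeafIdx s, ∃ P : PathDecomp (G j), P.width ≤ k - 1) :
    pathwidth (crossComposed s k G) ≤ k * (s + 2) - 2 := by
  obtain ⟨i, hi⟩ := hyes
  choose P hP using hdecomp
  have : Nonempty (PathDecomp (G i)) := ⟨P i⟩
  obtain ⟨Pi, hPi⟩ := exists_pathDecomp_card_bag_le hi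
  have hchoice : ∀ j, ∃ R : PathDecomp (G j),
      (∀ t, (R.bag t).card ≤ k) ∧ (j = i → ∀ t, (R.bag t).card ≤ k - 1) := by
    intro j
    by_cases hj : j = i
    · subst hj
      exact ⟨Pi, fun t => (hPi t).trans (by omega), fun _ t => (hPi t).trans (by omega)⟩
    · exact ⟨P j, fun t => ((P j).card_bag_le_width_add_one t).trans (by have := hP j; omega),
        fun h => absurd h hj⟩
  choose Q hQ hQi using hchoice
  exact CrossComposed.pathwidth_le_of_card_bag_le Q hQ i (hQi i rfl)
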